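/- Let I be a polynomial in the coefficients a_0, …, a_n that is homogeneous of degree g and isobaric of weight p, with n·g = 2·p. If I satisfies the differential equation D I = 0, then it also satisfies Δ I = 0. -/

import Mathlib

/-!
`D`, `Δ` and `H = Σₖ (n - 2k) aₖ ∂/∂aₖ` span a copy of `sl₂`: `[D, Δ] = H`, and by Euler's
identities `H` acts on a form of degree `g` and weight `q` as the scalar `n g - 2 q`. The forms
`Jₖ = Δᵏ I` have degree `g` and weight `p + k`, so `D I = 0` and `n g = 2 p` give
`D Jₖ₊₁ = -k (k + 1) Jₖ`. A nonzero form of degree `g` has weight at most `n g = 2 p`, hence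
`Jₚ₊₁ = 0`, and descending through the nonzero factors `-k (k + 1)` gives `J₁ = Δ I = 0`.
-/

open MvPolynomial

/-- The weight function assigning weight `i` to the coefficient variable `aᵢ`. -/
def wt (n : ℕ) : Fin (n + 1) → ℕ := fun i => (i : ℕ)

/-- The lowering operator `D A = Σ_{i=0}^{n-1} (i+1) · aᵢ · ∂A/∂a_{i+1}`. -/
noncomputable def Dop (n : ℕ) (A : MvPolynomial (Fin (n + 1)) ℚ) :
    MvPolynomial (Fin (n + 1)) ℚ :=
  ∑ i : Fin n, C ((i : ℕ) + 1 : ℚ) * X i.castSucc * pderiv i.succ A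

/-- The raising operator `Δ A = Σ_{i=0}^{n-1} (n-i) · a_{i+1} · ∂A/∂aᵢ`. -/
noncomputable def Δop (n : ℕ) (A : MvPolynomial (Fin (n + 1)) ℚ) :
    MvPolynomial (Fin (n + 1)) ℚ :=
  ∑ i : Fin n, C ((n - (i : ℕ) : ℕ) : ℚ) * X i.succ * pderiv i.castSucc A

namespace MvPolynomial

variable {σ R : Type*}

lemma lie_smul_X_smul_pderiv [CommRing R] [DecidableEq σ] (r s : R) (a b c d : σ) :
    ⁅r • (X a : MvPolynomial σ R) • pderiv (R := R) b,
      s • (X c : MvPolynomial σ R) • pderiv (R := R) d⁆ =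
      (r * s) • ((if b = c then (X a : MvPolynomial σ R) • pderiv (R := R) d else 0) -
        (if d = a then (X c : MvPolynomial σ R) • pderiv (R := R) b else 0)) := by
  apply derivation_ext
  intro k
  by_cases hbc : b = c <;> by_cases hda : d = a <;>
    simp [Derivation.commutator_apply, pderiv_X, Pi.single_apply, hbc, hda] <;>
    split_ifs <;> simp_all [smul_smul, mul_comm]

variable [CommSemiring R] {φ : MvPolynomial σ R} {w : σ → ℕ} {m : ℕ} {i : σ}

lemma IsWeightedHomogeneous.pderiv_eq_zero_of_lt (h : φ.IsWeightedHomogeneous w m)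
    (hm : m < w i) : pderiv i φ = 0 := by
  ext d
  rw [coeff_pderiv, h.coeff_eq_zero, zero_mul, coeff_zero]
  rw [map_add, Finsupp.weight_single, one_smul]
  omega

lemma IsWeightedHomogeneous.X_mul_pderiv (h : φ.IsWeightedHomogeneous w m) {j : σ}
    (hij : w i ≤ w j) : (X j * pderiv i φ).IsWeightedHomogeneous w (m + (w j - w i)) := by
  by_cases hm : w i ≤ m
  · convert (isWeightedHomogeneous_X R w j).mul (h.pderiv (i := i) (n' := m - w i) (by omega))
      using 1
    omega
  · rw [h.pderiv_eq_zero_of_lt (by omega), mul_zero]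
    exact isWeightedHomogeneous_zero R w _

lemma IsHomogeneous.eq_zero_of_mul_lt_weight [Fintype σ] {N g : ℕ} (hw : ∀ i, w i ≤ N)
    (hg : φ.IsHomogeneous g) (hm : φ.IsWeightedHomogeneous w m) (hlt : N * g < m) : φ = 0 := by
  by_contra hφ
  obtain ⟨d, hd⟩ := ne_zero_iff.mp hφ
  have hle : Finsupp.weight w d ≤ N * Finsupp.weight 1 d := by
    simp only [Finsupp.weight_eq_sum, Finset.mul_sum, smul_eq_mul, Pi.one_apply, mul_one]
    exact Finset.sum_le_sum fun i _ => mul_comm N (d i) ▸ Nat.mul_le_mul_left _ (hw i)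
  rw [hm hd, hg hd] at hle
  omega

end MvPolynomial

-- Both sums are reindexed over `Fin (n + 1)`; the boundary terms vanish because
-- `(k + 1) (n - k) = 0` at `k = n` and `k (n - k + 1) = 0` at `k = 0`.
lemma sum_smul_castSucc_sub_succ {M : Type*} [AddCommGroup M] [Module ℚ M] (n : ℕ)
    (T : Fin (n + 1) → M) :
    ∑ i : Fin n, (((i : ℚ) + 1) * ((n - i : ℕ) : ℚ)) • (T i.castSucc - T i.succ) =
      ∑ k : Fin (n + 1), ((n : ℚ) - 2 * k) • T k := by
  have hcastSucc : ∑ i : Fin n, (((i : ℚ) + 1) * ((n - i : ℕ) : ℚ)) • T i.castSucc =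
      ∑ k : Fin (n + 1), (((k : ℚ) + 1) * (n - k)) • T k := by
    rw [Fin.sum_univ_castSucc]
    simp [Nat.cast_sub (Fin.is_lt _).le]
  have hsucc : ∑ i : Fin n, (((i : ℚ) + 1) * ((n - i : ℕ) : ℚ)) • T i.succ =
      ∑ k : Fin (n + 1), ((k : ℚ) * (n - k + 1)) • T k := by
    rw [Fin.sum_univ_succ]
    simp only [Fin.val_zero, Nat.cast_zero, zero_mul, zero_smul, zero_add, Fin.val_succ]
    refine Finset.sum_congr rfl fun i _ => ?_
    rw [Nat.cast_sub i.is_lt.le]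
    push_cast
    ring_nf
  simp only [smul_sub, Finset.sum_sub_distrib]
  rw [hcastSucc, hsucc, ← Finset.sum_sub_distrib]
  refine Finset.sum_congr rfl fun k _ => ?_
  rw [← sub_smul]
  ring_nf

section

variable {n : ℕ}

-- `Dop` and `Δop` as derivations, so that their commutator is determined by the generators.
noncomputable def Dder (n : ℕ) :
    Derivation ℚ (MvPolynomial (Fin (n + 1)) ℚ) (MvPolynomial (Fin (n + 1)) ℚ) :=
  ∑ i : Fin n, ((i : ℚ) + 1) • (X i.castSucc : MvPolynomial (Fin (n + 1)) ℚ) • pderiv i.succ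

noncomputable def Δder (n : ℕ) :
    Derivation ℚ (MvPolynomial (Fin (n + 1)) ℚ) (MvPolynomial (Fin (n + 1)) ℚ) :=
  ∑ i : Fin n, ((n - i : ℕ) : ℚ) • (X i.succ : MvPolynomial (Fin (n + 1)) ℚ) • pderiv i.castSucc

lemma coe_Dder : ⇑(Dder n) = Dop n := by
  ext A : 1
  rw [Dder, ← Derivation.coeFnAddMonoidHom_apply, map_sum, Finset.sum_apply, Dop]
  simp only [Derivation.coeFnAddMonoidHom_apply, Derivation.smul_apply, smul_eq_C_mul,
    smul_eq_mul, mul_assoc]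

lemma coe_Δder : ⇑(Δder n) = Δop n := by
  ext A : 1
  rw [Δder, ← Derivation.coeFnAddMonoidHom_apply, map_sum, Finset.sum_apply, Δop]
  simp only [Derivation.coeFnAddMonoidHom_apply, Derivation.smul_apply, smul_eq_C_mul,
    smul_eq_mul, mul_assoc]

lemma lie_Dder_Δder : ⁅Dder n, Δder n⁆ =
    ∑ k : Fin (n + 1), ((n : ℚ) - 2 * k) • (X k : MvPolynomial (Fin (n + 1)) ℚ) • pderiv k := by
  refine .trans ?_ (sum_smul_castSucc_sub_succ n fun k => (X k : MvPolynomial _ ℚ) • pderiv k)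
  unfold Dder Δder
  simp only [sum_lie_sum, lie_smul_X_smul_pderiv, Fin.succ_inj, Fin.castSucc_inj, smul_sub,
    smul_ite, smul_zero, Finset.sum_sub_distrib, Finset.sum_ite_eq, Finset.sum_ite_eq',
    Finset.mem_univ, if_true]

lemma Dop_Δop_of_isWeightedHomogeneous {A : MvPolynomial (Fin (n + 1)) ℚ} {g q : ℕ}
    (hg : A.IsHomogeneous g) (hq : A.IsWeightedHomogeneous (wt n) q) :
    Dop n (Δop n A) = Δop n (Dop n A) + ((n * g : ℚ) - 2 * q) • A := by
  have hdeg : ∑ k, X k * pderiv k A = (g : ℚ) • A := by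
    rw [hg.sum_X_mul_pderiv, Nat.cast_smul_eq_nsmul]
  have hwt : ∑ k : Fin (n + 1), (k : ℚ) • (X k * pderiv k A) = (q : ℚ) • A := by
    simp only [Nat.cast_smul_eq_nsmul]
    exact hq.sum_weight_X_mul_pderiv
  rw [← sub_eq_iff_eq_add', ← coe_Dder, ← coe_Δder, ← Derivation.commutator_apply, lie_Dder_Δder,
    ← Derivation.coeFnAddMonoidHom_apply, map_sum, Finset.sum_apply]
  simp only [Derivation.coeFnAddMonoidHom_apply, Derivation.smul_apply, smul_eq_mul, sub_smul,
    Finset.sum_sub_distrib, mul_smul, ← Finset.smul_sum, hdeg, hwt]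

lemma Δop_smul (c : ℚ) (A : MvPolynomial (Fin (n + 1)) ℚ) : Δop n (c • A) = c • Δop n A := by
  rw [← coe_Δder, Derivation.map_smul]

lemma IsWeightedHomogeneous.iterate_Δop {w : Fin (n + 1) → ℕ} {s m : ℕ}
    (hw : ∀ i : Fin n, w i.succ = w i.castSucc + s) {A : MvPolynomial (Fin (n + 1)) ℚ}
    (h : A.IsWeightedHomogeneous w m) (k : ℕ) :
    ((Δop n)^[k] A).IsWeightedHomogeneous w (m + k * s) := by
  induction k with
  | zero => simpa using h
  | succ k ih =>
    rw [Function.iterate_succ_apply', Δop, add_one_mul, ← add_assoc]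
    refine IsWeightedHomogeneous.sum _ _ _ fun i _ => ?_
    have := ih.X_mul_pderiv (i := i.castSucc) (j := i.succ) (by have := hw i; omega)
    rw [hw i, Nat.add_sub_cancel_left] at this
    simpa only [mul_assoc] using this.C_mul _

lemma isHomogeneous_iterate_Δop {A : MvPolynomial (Fin (n + 1)) ℚ} {g : ℕ}
    (h : A.IsHomogeneous g) (k : ℕ) : ((Δop n)^[k] A).IsHomogeneous g := by
  simpa [IsHomogeneous] using IsWeightedHomogeneous.iterate_Δop (s := 0) (fun _ => rfl) h k

lemma isWeightedHomogeneous_wt_iterate_Δop {A : MvPolynomial (Fin (n + 1)) ℚ} {p : ℕ}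
    (h : A.IsWeightedHomogeneous (wt n) p) (k : ℕ) :
    ((Δop n)^[k] A).IsWeightedHomogeneous (wt n) (p + k) := by
  simpa using IsWeightedHomogeneous.iterate_Δop (s := 1) (fun _ => rfl) h k

lemma Dop_iterate_Δop_succ {I : MvPolynomial (Fin (n + 1)) ℚ} {g p : ℕ} (hg : I.IsHomogeneous g)
    (hp : I.IsWeightedHomogeneous (wt n) p) (hng : n * g = 2 * p) (hD : Dop n I = 0) (k : ℕ) :
    Dop n ((Δop n)^[k + 1] I) = (-(k * (k + 1)) : ℚ) • (Δop n)^[k] I := by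
  have hng' : (n : ℚ) * g = 2 * p := by exact_mod_cast hng
  induction k with
  | zero =>
    rw [Function.iterate_one, Dop_Δop_of_isWeightedHomogeneous hg hp, hD, ← coe_Δder, map_zero,
      hng']
    simp
  | succ k ih =>
    rw [Function.iterate_succ_apply' _ (k + 1), Dop_Δop_of_isWeightedHomogeneous
      (isHomogeneous_iterate_Δop hg _) (isWeightedHomogeneous_wt_iterate_Δop hp _), ih,
      Δop_smul, ← Function.iterate_succ_apply' (Δop n) k, ← add_smul]
    congr 1
    push_cast
    rw [hng']
    ring

end

/-- If `I` is homogeneous of degree `g` and isobaric of weight `p` with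
`n·g = 2·p`, and `D I = 0`, then also `Δ I = 0`. -/
theorem Δop_eq_zero_of_Dop_eq_zero (n g p : ℕ)
    (I : MvPolynomial (Fin (n + 1)) ℚ)
    (hg : I.IsHomogeneous g) (hp : I.IsWeightedHomogeneous (wt n) p)
    (hng : n * g = 2 * p) (hD : Dop n I = 0) :
    Δop n I = 0 := by
  have hvanish : (Δop n)^[p + 1] I = 0 :=
    (isHomogeneous_iterate_Δop hg _).eq_zero_of_mul_lt_weight (fun i => Fin.is_le i)
      (isWeightedHomogeneous_wt_iterate_Δop hp _) (by omega)
  refine Nat.decreasingInduction' (P := fun k => (Δop n)^[k] I = 0) (fun k _ hk hvanish_succ => ?_)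
    (by omega : 1 ≤ p + 1) hvanish
  have hk' : (0 : ℚ) < k := by exact_mod_cast hk
  have := Dop_iterate_Δop_succ hg hp hng hD k
  rw [hvanish_succ, ← coe_Dder, map_zero, eq_comm, smul_eq_zero] at this
  exact this.resolve_left (by nlinarith)
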